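/- arXiv:1002.4807 — 5 statements merged into one kernel-verified Lean document; each statement's English description precedes it below -/
import Mathlib

section
/- All solutions of the chemostat system with non-negative initial conditions are bounded and defined for all t ≥ 0. -/
/-!
Every solution stays in a compact box whose size does not depend on time. Each `xᵢ` solves a
linear equation `xᵢ' = aᵢ(t) xᵢ`, so it cannot change sign. `S` cannot leave
`[0, max S(0) S⁰ + 1]`: at `S = 0` its derivative is `D S⁰ > 0`, at the upper level it is
`≤ D (S⁰ - S) < 0`. On that interval choose `m > 0` and weights `cᵢ > 0` with
`cᵢ (pᵢ - Dᵢ + m) ≤ fᵢ` (possible because `pᵢ(0) = 0` and `fᵢ > 0` away from `0`); then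
`V = S + ∑ cᵢ xᵢ` satisfies `V' ≤ D S⁰ - m V`, so `V` stays below `max V(0) (2 D S⁰ / m)`.

For existence, the vector field is replaced outside a large ball by its values on the ball. The
modified field is globally Lipschitz and bounded, so Picard–Lindelöf yields a solution for all
times, and the a priori bound keeps that solution inside the ball, where it solves the original
system.
-/

open Set Filter Topology NNReal Metric

theorem LocallyLipschitz.pi {α ι : Type*} [PseudoEMetricSpace α] [Fintype ι] {β : ι → Type*}
    [∀ i, PseudoEMetricSpace (β i)] {g : ∀ i, α → β i} (hg : ∀ i, LocallyLipschitz (g i)) :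
    LocallyLipschitz fun a i => g i a := by
  intro a
  choose K t ht hK using fun i => hg i a
  refine ⟨Finset.univ.sup K, ⋂ i, t i, iInter_mem.2 ht, fun x hx y hy => ?_⟩
  refine edist_pi_le_iff.2 fun i => (hK i (mem_iInter.1 hx i) (mem_iInter.1 hy i)).trans ?_
  gcongr
  exact Finset.le_sup (Finset.mem_univ i)

theorem le_of_hasDerivAt_of_eq_imp_neg {g g' : ℝ → ℝ} {a b L : ℝ}
    (hg : ∀ t ∈ Icc a b, HasDerivAt g (g' t) t) (ha : g a ≤ L)
    (hL : ∀ t ∈ Ico a b, g t = L → g' t < 0) : ∀ t ∈ Icc a b, g t ≤ L :=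
  image_le_of_deriv_right_lt_deriv_boundary' (B := fun _ => L)
    (fun t ht => (hg t ht).continuousAt.continuousWithinAt)
    (fun t ht => (hg t (Ico_subset_Icc_self ht)).hasDerivWithinAt) ha continuousOn_const
    (fun _ _ => hasDerivWithinAt_const _ _ _) hL

theorem nonneg_of_hasDerivAt_mul_self {x a : ℝ → ℝ} {T : ℝ} (ha : ContinuousOn a (Icc 0 T))
    (hx : ∀ t ∈ Icc 0 T, HasDerivAt x (a t * x t) t) (h0 : 0 ≤ x 0) :
    ∀ t ∈ Icc 0 T, 0 ≤ x t := by
  intro t₁ ht₁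
  by_contra! hneg
  have hcont : ContinuousOn x (Icc 0 t₁) := fun t ht =>
    (hx t ⟨ht.1, ht.2.trans ht₁.2⟩).continuousAt.continuousWithinAt
  obtain ⟨t₀, ht₀, hzero⟩ := intermediate_value_Icc' ht₁.1 hcont ⟨hneg.le, h0⟩
  obtain ⟨C, hC⟩ := isCompact_Icc.exists_bound_of_continuousOn ha
  have sub : Icc t₀ t₁ ⊆ Icc 0 T := Icc_subset_Icc ht₀.1 ht₁.2
  -- `x` vanishes at `t₀` and `|x'| ≤ C |x|`, so Gronwall forces `x = 0` on `[t₀, t₁]`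
  have := eq_zero_of_abs_deriv_le_mul_abs_self_of_eq_zero_right (K := C)
    (hcont.mono (Icc_subset_Icc_left ht₀.1))
    (fun t ht => (hx t (sub (Ico_subset_Icc_self ht))).hasDerivWithinAt) hzero
    (fun t ht => by
      rw [norm_mul]
      exact mul_le_mul_of_nonneg_right (hC t (sub (Ico_subset_Icc_self ht))) (norm_nonneg _))
    t₁ ⟨ht₀.2, le_rfl⟩
  exact hneg.ne this

theorem exists_pos_forall_mul_sub_le {f p : ℝ → ℝ} {d B : ℝ} (hd : 0 < d) (hf : Continuous f)
    (hp : Continuous p) (hp0 : p 0 = 0) (hf_nonneg : ∀ s, 0 ≤ s → 0 ≤ f s)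
    (hf_pos : ∀ s, 0 < s → 0 < f s) : ∃ c > 0, ∀ s ∈ Icc 0 B, c * (p s - d) ≤ f s := by
  obtain ⟨σ, hσ, hpσ⟩ : ∃ σ > 0, ∀ s, dist s 0 < σ → p s < d :=
    Metric.eventually_nhds_iff.1 ((hp.tendsto' 0 0 hp0).eventually (eventually_lt_nhds hd))
  obtain ⟨C, hC⟩ := (isCompact_Icc (a := σ) (b := B)).exists_bound_of_continuousOn
    ((hp.sub continuous_const).continuousOn.div hf.continuousOn
      fun s hs => (hf_pos s (hσ.trans_le hs.1)).ne')
  refine ⟨1 / (|C| + 1), by positivity, fun s hs => ?_⟩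
  rcases lt_or_ge s σ with hsσ | hσs
  · have hps : p s < d := hpσ s (by rwa [Real.dist_0_eq_abs, abs_of_nonneg hs.1])
    have : 0 < 1 / (|C| + 1) := by positivity
    nlinarith [hf_nonneg s hs.1]
  · have hfs := hf_pos s (hσ.trans_le hσs)
    have hq : (p s - d) / f s ≤ |C| :=
      (le_abs_self _).trans ((hC s ⟨hσs, hs.2⟩).trans (le_abs_self C))
    rw [div_le_iff₀ hfs] at hq
    rw [div_mul_eq_mul_div, one_mul, div_le_iff₀ (by positivity)]
    nlinarith [abs_nonneg C]

section ODE

variable {E : Type*} [NormedAddCommGroup E] [NormedSpace ℝ E]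

theorem LipschitzWith.exists_forall_hasDerivAt [CompleteSpace E] {w : E → E} {K C : ℝ≥0}
    (hw : LipschitzWith K w) (hC : ∀ z, ‖w z‖ ≤ C) (z₀ : E) :
    ∃ z : ℝ → E, z 0 = z₀ ∧ ∀ t, HasDerivAt z (w (z t)) t := by
  have local_sol (T : ℝ≥0) :
      ∃ α : ℝ → E, α 0 = z₀ ∧ ∀ t : ℝ, |t| < T → HasDerivAt α (w (α t)) t := by
    have hPL : IsPicardLindelof (fun _ => w) (⟨0, by simp⟩ : Icc (-(T : ℝ)) T) z₀ (C * T) 0 C K :=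
      .of_time_independent (fun z _ => hC z) hw.lipschitzOnWith (by simp)
    obtain ⟨α, hα0, hα⟩ := hPL.exists_eq_forall_mem_Icc_hasDerivWithinAt₀
    refine ⟨α, hα0, fun t ht => ?_⟩
    obtain ⟨h1, h2⟩ := abs_lt.1 ht
    exact (hα t ⟨h1.le, h2.le⟩).hasDerivAt (Icc_mem_nhds h1 h2)
  choose α hα0 hα using fun k : ℕ => local_sol ⟨k + 1, by positivity⟩
  have agree {j k : ℕ} {t : ℝ} (hj : |t| < j + 1) (hk : |t| < k + 1) : α j t = α k t := by
    set R := min ((j : ℝ) + 1) (k + 1)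
    have hR : 0 < R := by positivity
    exact ODE_solution_unique_of_mem_Ioo (s := fun _ => univ) (fun _ _ => hw.lipschitzOnWith)
      (t₀ := 0) ⟨neg_lt_zero.2 hR, hR⟩
      (fun s hs => ⟨hα j s ((abs_lt.2 hs).trans_le (min_le_left _ _)), trivial⟩)
      (fun s hs => ⟨hα k s ((abs_lt.2 hs).trans_le (min_le_right _ _)), trivial⟩)
      (by rw [hα0, hα0]) (abs_lt.1 (lt_min hj hk))
  have ceil_lt (s : ℝ) : |s| < ⌈|s|⌉₊ + 1 := (Nat.le_ceil _).trans_lt (lt_add_one _)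
  refine ⟨fun t => α ⌈|t|⌉₊ t, by simpa using hα0 0, fun t => ?_⟩
  -- near `t`, the glued curve is the single local solution `α (⌈|t|⌉₊ + 1)`
  set k := ⌈|t|⌉₊ + 1
  have hk : |t| + 1 ≤ k := by push_cast [k]; linarith [Nat.le_ceil |t|]
  have heq : (fun s => α ⌈|s|⌉₊ s) =ᶠ[𝓝 t] α k := by
    filter_upwards [(continuous_abs.tendsto t).eventually (eventually_lt_nhds (lt_add_one |t|))]
      with s hs
    exact agree (ceil_lt s) (by linarith)
  have ht : |t| < (k : ℝ) + 1 := by linarith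
  convert (hα k t ht).congr_of_eventuallyEq heq using 2
  exact heq.eq_of_nhds

theorem forall_hasDerivAt_of_eqOn_ball {v w : E → E} {z : ℝ → E} {M R : ℝ} (hMR : M < R)
    (hvw : EqOn w v (ball 0 R)) (hz : ∀ t, 0 ≤ t → HasDerivAt z (w (z t)) t) (hz0 : ‖z 0‖ < R)
    (hM : ∀ T, 0 ≤ T → (∀ t ∈ Icc 0 T, HasDerivAt z (v (z t)) t) → ‖z T‖ ≤ M) :
    ∀ t, 0 ≤ t → HasDerivAt z (v (z t)) t := by
  suffices inside : ∀ t, 0 ≤ t → ‖z t‖ < R from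
    fun t ht => hvw (mem_ball_zero_iff.2 (inside t ht)) ▸ hz t ht
  intro t₁ ht₁
  by_contra! hexit
  -- `s` is the first time `z` reaches the sphere of radius `R`; before `s` it solves the
  -- equation for `v`, so it stays in the smaller ball of radius `M`
  set A := Icc 0 t₁ ∩ {t | R ≤ ‖z t‖}
  have hA : IsClosed A := ContinuousOn.preimage_isClosed_of_isClosed
    (fun t ht => (hz t ht.1).continuousAt.norm.continuousWithinAt) isClosed_Icc isClosed_Ici
  have hbdd : BddBelow A := ⟨0, fun t ht => ht.1.1⟩
  have hsA : sInf A ∈ A := hA.csInf_mem ⟨t₁, ⟨ht₁, le_rfl⟩, hexit⟩ hbdd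
  set s := sInf A
  have before : ∀ t ∈ Ico 0 s, ‖z t‖ < R := fun t ht => not_le.1 fun h =>
    (csInf_le hbdd ⟨⟨ht.1, ht.2.le.trans hsA.1.2⟩, h⟩).not_gt ht.2
  have hs0 : 0 < s := hsA.1.1.lt_of_ne fun h => (h ▸ hsA.2).not_gt hz0
  have bound : ∀ T ∈ Ioo 0 s, ‖z T‖ ≤ M := fun T hT => hM T hT.1.le fun t ht =>
    hvw (mem_ball_zero_iff.2 (before t ⟨ht.1, ht.2.trans_lt hT.2⟩)) ▸ hz t ht.1
  have : ‖z s‖ ≤ M := le_of_tendsto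
    ((hz s hsA.1.1).continuousAt.norm.tendsto.mono_left nhdsWithin_le_nhds)
    (eventually_of_mem (Ioo_mem_nhdsLT hs0) bound)
  exact this.not_gt (hMR.trans_le hsA.2)

end ODE

section Clamp

variable {ι : Type*} [Fintype ι]

-- In the sup norm `closedBall 0 R` is a box, and `clampBall R` is the coordinatewise retraction
-- onto it.
def clampBall (R : ℝ) (z : ℝ × (ι → ℝ)) : ℝ × (ι → ℝ) :=
  (max (-R) (min z.1 R), fun i => max (-R) (min (z.2 i) R))

theorem lipschitzWith_clampBall (R : ℝ) : LipschitzWith 1 (clampBall (ι := ι) R) := by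
  have hc : LipschitzWith 1 fun s : ℝ => max (-R) (min s R) :=
    (LipschitzWith.id.min_const R).const_max (-R)
  refine LipschitzWith.of_dist_le_mul fun a b => ?_
  rw [NNReal.coe_one, one_mul, Prod.dist_eq, Prod.dist_eq]
  refine max_le_max ((hc.dist_le_mul _ _).trans_eq (one_mul _))
    ((dist_pi_le_iff dist_nonneg).2 fun i => ?_)
  exact (hc.dist_le_mul _ _).trans (by rw [NNReal.coe_one, one_mul]; exact dist_le_pi_dist _ _ i)

theorem norm_clampBall_le {R : ℝ} (hR : 0 ≤ R) (z : ℝ × (ι → ℝ)) : ‖clampBall R z‖ ≤ R := by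
  have hc (s : ℝ) : ‖max (-R) (min s R)‖ ≤ R :=
    abs_le.2 ⟨le_max_left _ _, max_le (neg_le_self hR) (min_le_right _ _)⟩
  exact norm_prod_le_iff.2 ⟨hc _, (pi_norm_le_iff_of_nonneg hR).2 fun i => hc _⟩

theorem clampBall_of_norm_le {R : ℝ} {z : ℝ × (ι → ℝ)} (hz : ‖z‖ ≤ R) : clampBall R z = z := by
  have hc {s : ℝ} (hs : ‖s‖ ≤ R) : max (-R) (min s R) = s := by
    rw [Real.norm_eq_abs, abs_le] at hs
    rw [min_eq_left hs.2, max_eq_right hs.1]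
  obtain ⟨h1, h2⟩ := norm_prod_le_iff.1 hz
  exact Prod.ext (hc h1) (funext fun i => hc ((norm_le_pi_norm _ i).trans h2))

end Clamp

theorem LocallyLipschitz.exists_forall_hasDerivAt_of_norm_le {ι : Type*} [Fintype ι]
    {v : ℝ × (ι → ℝ) → ℝ × (ι → ℝ)} (hv : LocallyLipschitz v) (z₀ : ℝ × (ι → ℝ)) {M : ℝ}
    (hM : ∀ (z : ℝ → ℝ × (ι → ℝ)) (T : ℝ), 0 ≤ T → z 0 = z₀ →
      (∀ t ∈ Icc 0 T, HasDerivAt z (v (z t)) t) → ‖z T‖ ≤ M) :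
    ∃ z : ℝ → ℝ × (ι → ℝ), z 0 = z₀ ∧ ∀ t, 0 ≤ t → HasDerivAt z (v (z t)) t := by
  set R := max M ‖z₀‖ + 1
  have hR : 0 ≤ R := by positivity
  obtain ⟨K, hK⟩ :=
    hv.locallyLipschitzOn.exists_lipschitzOnWith_of_compact (isCompact_closedBall 0 R)
  obtain ⟨C, hC⟩ := (isCompact_closedBall (0 : ℝ × (ι → ℝ)) R).exists_bound_of_continuousOn
    hv.continuous.continuousOn
  have maps (y : ℝ × (ι → ℝ)) : clampBall R y ∈ closedBall 0 R :=
    mem_closedBall_zero_iff.2 (norm_clampBall_le hR y)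
  have hw : LipschitzWith (K * 1) (v ∘ clampBall R) := lipschitzOnWith_univ.1
    (hK.comp (lipschitzWith_clampBall R).lipschitzOnWith fun y _ => maps y)
  obtain ⟨z, hz0, hz⟩ := hw.exists_forall_hasDerivAt (C := C.toNNReal)
    (fun y => (hC _ (maps y)).trans (Real.le_coe_toNNReal C)) z₀
  refine ⟨z, hz0, forall_hasDerivAt_of_eqOn_ball ((le_max_left _ _).trans_lt (lt_add_one _))
    (fun y hy => congrArg v (clampBall_of_norm_le (mem_ball_zero_iff.1 hy).le))
    (fun t _ => hz t) (hz0 ▸ (le_max_right _ _).trans_lt (lt_add_one _))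
    fun T hT => hM z T hT hz0⟩

section Chemostat

variable {n : ℕ}

def chemostatField (S0 D : ℝ) (Di : Fin n → ℝ) (f p : Fin n → ℝ → ℝ) (z : ℝ × (Fin n → ℝ)) :
    ℝ × (Fin n → ℝ) :=
  (D * (S0 - z.1) - ∑ i, f i z.1 * z.2 i, fun i => (p i z.1 - Di i) * z.2 i)

theorem chemostat_lyapunov_deriv_le {ι : Type*} [Fintype ι] {s S0 D m : ℝ} {a b c y Di : ι → ℝ}
    (hs : 0 ≤ s) (hmD : m ≤ D) (hy : ∀ i, 0 ≤ y i) (hc : ∀ i, c i * (b i - (Di i - m)) ≤ a i) :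
    (D * (S0 - s) - ∑ i, a i * y i) + ∑ i, c i * ((b i - Di i) * y i)
      ≤ D * S0 - m * (s + ∑ i, c i * y i) := by
  have hterm : ∀ i ∈ Finset.univ, c i * ((b i - Di i) * y i) - a i * y i ≤ -(m * (c i * y i)) :=
    fun i _ => by nlinarith [mul_le_mul_of_nonneg_right (hc i) (hy i)]
  have hsum := Finset.sum_le_sum hterm
  rw [Finset.sum_sub_distrib, Finset.sum_neg_distrib, ← Finset.mul_sum] at hsum
  nlinarith [mul_le_mul_of_nonneg_right hmD hs]

variable {S0 D : ℝ} {Di : Fin n → ℝ} {f p : Fin n → ℝ → ℝ}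

theorem locallyLipschitz_chemostatField (hf : ∀ i, LocallyLipschitz (f i))
    (hp : ∀ i, LocallyLipschitz (p i)) : LocallyLipschitz (chemostatField S0 D Di f p) := by
  -- the field is a polynomial in `(S, x)` and the values `fᵢ(S)`, `pᵢ(S)`
  have hΦ : ContDiff ℝ 1 fun w : (ℝ × (Fin n → ℝ)) × (Fin n → ℝ) × (Fin n → ℝ) =>
      (D * (S0 - w.1.1) - ∑ i, w.2.1 i * w.1.2 i, fun i => (w.2.2 i - Di i) * w.1.2 i) := by
    fun_prop
  have hcoeff (q : Fin n → ℝ → ℝ) (hq : ∀ i, LocallyLipschitz (q i)) :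
      LocallyLipschitz fun z : ℝ × (Fin n → ℝ) => fun i => q i z.1 :=
    (LocallyLipschitz.pi hq).comp LipschitzWith.prod_fst.locallyLipschitz
  have hlift := LocallyLipschitz.id.prodMk ((hcoeff f hf).prodMk (hcoeff p hp))
  exact (hΦ.locallyLipschitz.comp hlift :)

structure IsChemostatSolutionOn (S0 D : ℝ) (Di : Fin n → ℝ) (f p : Fin n → ℝ → ℝ) (I : Set ℝ)
    (S : ℝ → ℝ) (x : Fin n → ℝ → ℝ) : Prop where
  hasDerivAt_S : ∀ t ∈ I, HasDerivAt S (D * (S0 - S t) - ∑ i, f i (S t) * x i t) t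
  hasDerivAt_x : ∀ i, ∀ t ∈ I, HasDerivAt (x i) ((p i (S t) - Di i) * x i t) t

namespace IsChemostatSolutionOn

variable {I J : Set ℝ} {T : ℝ} {S : ℝ → ℝ} {x : Fin n → ℝ → ℝ}

theorem mono (h : IsChemostatSolutionOn S0 D Di f p I S x) (hJI : J ⊆ I) :
    IsChemostatSolutionOn S0 D Di f p J S x :=
  ⟨fun t ht => h.hasDerivAt_S t (hJI ht), fun i t ht => h.hasDerivAt_x i t (hJI ht)⟩

theorem of_hasDerivAt {z : ℝ → ℝ × (Fin n → ℝ)}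
    (hz : ∀ t ∈ I, HasDerivAt z (chemostatField S0 D Di f p (z t)) t) :
    IsChemostatSolutionOn S0 D Di f p I (fun t => (z t).1) (fun i t => (z t).2 i) where
  hasDerivAt_S t ht := (hasFDerivAt_fst (p := z t)).comp_hasDerivAt t (hz t ht)
  hasDerivAt_x i t ht :=
    hasDerivAt_pi.1 ((hasFDerivAt_snd (p := z t)).comp_hasDerivAt t (hz t ht)) i

theorem x_nonneg (h : IsChemostatSolutionOn S0 D Di f p (Icc 0 T) S x)
    (hp : ∀ i, Continuous (p i)) (hx0 : ∀ i, 0 ≤ x i 0) : ∀ i, ∀ t ∈ Icc 0 T, 0 ≤ x i t := by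
  have hS : ContinuousOn S (Icc 0 T) := fun t ht =>
    (h.hasDerivAt_S t ht).continuousAt.continuousWithinAt
  exact fun i => nonneg_of_hasDerivAt_mul_self
    (((hp i).comp_continuousOn hS).sub continuousOn_const) (h.hasDerivAt_x i) (hx0 i)

theorem S_nonneg (h : IsChemostatSolutionOn S0 D Di f p (Icc 0 T) S x) (hS0 : 0 < S0)
    (hD : 0 < D) (hf0 : ∀ i, f i 0 = 0) (h0 : 0 ≤ S 0) : ∀ t ∈ Icc 0 T, 0 ≤ S t := by
  have := le_of_hasDerivAt_of_eq_imp_neg (L := 0) (fun t ht => (h.hasDerivAt_S t ht).neg)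
    (neg_nonpos.2 h0) fun t _ hSt => ?_
  · exact fun t ht => neg_nonpos.1 (this t ht)
  · rw [neg_eq_zero.1 hSt]
    simpa [hf0] using mul_pos hD hS0

theorem S_le (h : IsChemostatSolutionOn S0 D Di f p (Icc 0 T) S x) (hD : 0 < D)
    (hf : ∀ i s, 0 ≤ s → 0 ≤ f i s) (hS : ∀ t ∈ Icc 0 T, 0 ≤ S t)
    (hx : ∀ i, ∀ t ∈ Icc 0 T, 0 ≤ x i t) {B : ℝ} (hB : S0 < B) (h0 : S 0 ≤ B) :
    ∀ t ∈ Icc 0 T, S t ≤ B :=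
  le_of_hasDerivAt_of_eq_imp_neg h.hasDerivAt_S h0 fun t ht hSt => by
    have ht' := Ico_subset_Icc_self ht
    have : 0 ≤ ∑ i, f i (S t) * x i t :=
      Finset.sum_nonneg fun i _ => mul_nonneg (hf i _ (hS t ht')) (hx i t ht')
    rw [hSt] at this ⊢
    nlinarith

theorem lyapunov_le (h : IsChemostatSolutionOn S0 D Di f p (Icc 0 T) S x) {B m L : ℝ}
    {c : Fin n → ℝ} (hmD : m ≤ D) (hc : ∀ i, ∀ s ∈ Icc 0 B, c i * (p i s - (Di i - m)) ≤ f i s)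
    (hS : ∀ t ∈ Icc 0 T, S t ∈ Icc 0 B) (hx : ∀ i, ∀ t ∈ Icc 0 T, 0 ≤ x i t)
    (h0 : S 0 + ∑ i, c i * x i 0 ≤ L) (hL : D * S0 < m * L) :
    ∀ t ∈ Icc 0 T, S t + ∑ i, c i * x i t ≤ L :=
  le_of_hasDerivAt_of_eq_imp_neg (fun t ht => (h.hasDerivAt_S t ht).add
      (HasDerivAt.fun_sum fun i _ => (h.hasDerivAt_x i t ht).const_mul (c i))) h0
    fun t ht hV => by
      have ht' := Ico_subset_Icc_self ht
      have := chemostat_lyapunov_deriv_le (S0 := S0) (hS t ht').1 hmD (fun i => hx i t ht')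
        fun i => hc i _ (hS t ht')
      rw [hV] at this
      linarith

end IsChemostatSolutionOn

theorem exists_forall_abs_le_of_isChemostatSolutionOn (hS0 : 0 < S0) (hD : 0 < D)
    (hDi : ∀ i, 0 < Di i) (hf : ∀ i, Continuous (f i)) (hp : ∀ i, Continuous (p i))
    (hf0 : ∀ i, f i 0 = 0) (hp0 : ∀ i, p i 0 = 0) (hfpos : ∀ i, ∀ s > (0:ℝ), 0 < f i s)
    (Sinit : ℝ) (xinit : Fin n → ℝ) (hS_init : 0 ≤ Sinit) (hx_init : ∀ i, 0 ≤ xinit i) :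
    ∃ M, ∀ (T : ℝ) (S : ℝ → ℝ) (x : Fin n → ℝ → ℝ), 0 ≤ T → S 0 = Sinit →
      (∀ i, x i 0 = xinit i) → IsChemostatSolutionOn S0 D Di f p (Icc 0 T) S x →
      |S T| ≤ M ∧ ∀ i, |x i T| ≤ M := by
  have hf_nonneg (i : Fin n) (s : ℝ) (hs : 0 ≤ s) : 0 ≤ f i s :=
    hs.eq_or_lt.elim (fun h => h ▸ (hf0 i).ge) fun h => (hfpos i s h).le
  obtain ⟨m, hm0, hmD, hmDi⟩ : ∃ m : ℝ, 0 < m ∧ m ≤ D ∧ ∀ i, m < Di i :=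
    (eventually_mem_nhdsWithin.and (nhdsWithin_le_nhds ((eventually_le_nhds hD).and
      (eventually_all.2 fun i => eventually_lt_nhds (hDi i))))).exists (f := 𝓝[>] 0)
  set B := max Sinit S0 + 1
  choose c hc0 hc using fun i => exists_pos_forall_mul_sub_le (B := B) (sub_pos.2 (hmDi i))
    (hf i) (hp i) (hp0 i) (hf_nonneg i) (hfpos i)
  set L := max (Sinit + ∑ i, c i * xinit i) (2 * D * S0 / m)
  have hL0 : 0 ≤ L := le_max_of_le_right (by positivity)
  have hL : D * S0 < m * L := calc
    D * S0 < m * (2 * D * S0 / m) := by field_simp; nlinarith [mul_pos hD hS0]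
    _ ≤ m * L := by gcongr; exact le_max_right _ _
  refine ⟨B + ∑ i, L / c i, fun T S x hT hS_0 hx_0 h => ?_⟩
  have hx := h.x_nonneg hp fun i => (hx_0 i).symm ▸ hx_init i
  have hS := h.S_nonneg hS0 hD hf0 (hS_0 ▸ hS_init)
  have hSB := h.S_le hD hf_nonneg hS hx (B := B) (by linarith [le_max_right Sinit S0])
    (by linarith [le_max_left Sinit S0])
  have hV := h.lyapunov_le hmD hc (fun t ht => ⟨hS t ht, hSB t ht⟩) hx (L := L)
    (by simp only [hS_0, hx_0]; exact le_max_left _ _) hL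
  have hT' : T ∈ Icc 0 T := ⟨hT, le_rfl⟩
  have hB : 0 ≤ B := by positivity
  have hsum : 0 ≤ ∑ i, L / c i := Finset.sum_nonneg fun i _ => div_nonneg hL0 (hc0 i).le
  refine ⟨by rw [abs_of_nonneg (hS T hT')]; linarith [hSB T hT'], fun i => ?_⟩
  rw [abs_of_nonneg (hx i T hT')]
  have h1 : c i * x i T ≤ ∑ j, c j * x j T := Finset.single_le_sum (f := fun j => c j * x j T)
    (fun j _ => mul_nonneg (hc0 j).le (hx j T hT')) (Finset.mem_univ i)
  have h2 : x i T ≤ L / c i := by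
    rw [le_div_iff₀ (hc0 i), mul_comm]; linarith [hV T hT', hS T hT']
  have h3 : L / c i ≤ ∑ j, L / c j := Finset.single_le_sum (f := fun j => L / c j)
    (fun j _ => div_nonneg hL0 (hc0 j).le) (Finset.mem_univ i)
  linarith

end Chemostat

theorem chemostat_solutions_global_and_bounded_general
    (n : ℕ) (S0 D : ℝ) (Di : Fin n → ℝ)
    (f p : Fin n → ℝ → ℝ)
    (hS0 : 0 < S0) (hD : 0 < D) (hDi : ∀ i, 0 < Di i)
    (hfL : ∀ i, LocallyLipschitz (f i)) (hpL : ∀ i, LocallyLipschitz (p i))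
    (hf0 : ∀ i, f i 0 = 0) (hp0 : ∀ i, p i 0 = 0)
    (hfpos : ∀ i, ∀ s > (0:ℝ), 0 < f i s)
    (Sinit : ℝ) (xinit : Fin n → ℝ)
    (hS_init : 0 ≤ Sinit) (hx_init : ∀ i, 0 ≤ xinit i) :
    -- the solution is defined for all t ≥ 0 ...
    (∃ S : ℝ → ℝ, ∃ x : Fin n → ℝ → ℝ,
      S 0 = Sinit ∧ (∀ i, x i 0 = xinit i) ∧
      (∀ t ∈ Ici (0:ℝ),
        HasDerivAt S (D * (S0 - S t) - ∑ i, f i (S t) * x i t) t) ∧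
      (∀ i, ∀ t ∈ Ici (0:ℝ),
        HasDerivAt (x i) ((p i (S t) - Di i) * x i t) t)) ∧
    -- ... and every such global solution is bounded on [0, ∞)
    (∀ S : ℝ → ℝ, ∀ x : Fin n → ℝ → ℝ,
      S 0 = Sinit → (∀ i, x i 0 = xinit i) →
      (∀ t ∈ Ici (0:ℝ),
        HasDerivAt S (D * (S0 - S t) - ∑ i, f i (S t) * x i t) t) →
      (∀ i, ∀ t ∈ Ici (0:ℝ),
        HasDerivAt (x i) ((p i (S t) - Di i) * x i t) t) →
      ∃ M : ℝ, ∀ t ∈ Ici (0:ℝ), |S t| ≤ M ∧ ∀ i, |x i t| ≤ M) := by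
  obtain ⟨M, hM⟩ := exists_forall_abs_le_of_isChemostatSolutionOn hS0 hD hDi
    (fun i => (hfL i).continuous) (fun i => (hpL i).continuous) hf0 hp0 hfpos
    Sinit xinit hS_init hx_init
  refine ⟨?_, fun S x hS_0 hx_0 hS hx => ⟨M, fun t ht =>
    hM t S x ht hS_0 hx_0 (IsChemostatSolutionOn.mono ⟨hS, hx⟩ Icc_subset_Ici_self)⟩⟩
  obtain ⟨z, hz0, hz⟩ := (locallyLipschitz_chemostatField (S0 := S0) (D := D) (Di := Di) hfL
    hpL).exists_forall_hasDerivAt_of_norm_le (Sinit, xinit) (M := M)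
    fun z T hT hz0 hz => by
      obtain ⟨hS, hx⟩ := hM T _ _ hT (by rw [hz0]) (fun i => by rw [hz0])
        (.of_hasDerivAt hz)
      exact norm_prod_le_iff.2 ⟨hS, (pi_norm_le_iff_of_nonneg ((abs_nonneg _).trans hS)).2 hx⟩
  have hsol := IsChemostatSolutionOn.of_hasDerivAt (I := Ici 0) hz
  exact ⟨_, _, by rw [hz0], fun i => by rw [hz0], hsol.hasDerivAt_S, hsol.hasDerivAt_x⟩

/-- All solutions of the chemostat system with non-negative initial
conditions are defined for all `t ≥ 0` and bounded: there exists a global solution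
with the given initial data, and every global solution is bounded on `[0, ∞)`. -/
theorem chemostat_solutions_global_and_bounded
    (n : ℕ) (S0 D : ℝ) (Di : Fin n → ℝ)
    (f p : Fin n → ℝ → ℝ)
    (hS0 : 0 < S0) (hD : 0 < D) (hDi : ∀ i, 0 < Di i)
    (hfL : ∀ i, LocallyLipschitz (f i)) (hpL : ∀ i, LocallyLipschitz (p i))
    (hf0 : ∀ i, f i 0 = 0) (hp0 : ∀ i, p i 0 = 0)
    (hfpos : ∀ i, ∀ s > (0:ℝ), 0 < f i s) (hppos : ∀ i, ∀ s > (0:ℝ), 0 < p i s)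
    (Sinit : ℝ) (xinit : Fin n → ℝ)
    (hS_init : 0 ≤ Sinit) (hx_init : ∀ i, 0 ≤ xinit i) :
    -- the solution is defined for all t ≥ 0 ...
    (∃ S : ℝ → ℝ, ∃ x : Fin n → ℝ → ℝ,
      S 0 = Sinit ∧ (∀ i, x i 0 = xinit i) ∧
      (∀ t ∈ Ici (0:ℝ),
        HasDerivAt S (D * (S0 - S t) - ∑ i, f i (S t) * x i t) t) ∧
      (∀ i, ∀ t ∈ Ici (0:ℝ),
        HasDerivAt (x i) ((p i (S t) - Di i) * x i t) t)) ∧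
    -- ... and every such global solution is bounded on [0, ∞)
    (∀ S : ℝ → ℝ, ∀ x : Fin n → ℝ → ℝ,
      S 0 = Sinit → (∀ i, x i 0 = xinit i) →
      (∀ t ∈ Ici (0:ℝ),
        HasDerivAt S (D * (S0 - S t) - ∑ i, f i (S t) * x i t) t) →
      (∀ i, ∀ t ∈ Ici (0:ℝ),
        HasDerivAt (x i) ((p i (S t) - Di i) * x i t) t) →
      ∃ M : ℝ, ∀ t ∈ Ici (0:ℝ), |S t| ≤ M ∧ ∀ i, |x i t| ≤ M) :=
  chemostat_solutions_global_and_bounded_general n S0 D Di f p hS0 hD hDi hfL hpL hf0 hp0 hfpos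
    Sinit xinit hS_init hx_init
end

section
/- If λ_i < S^0 < μ_i for some i with x_i(0) > 0, then S(t) < S^0 for all sufficiently large t along any solution of the chemostat system with positive initial conditions. -/
/-! Solutions stay in the positive orthant, so `S' ≤ D (S0 - S)` and `(S - S0) e^{Dt}` is
nonincreasing: the excess of `S` over `S0` decays exponentially, and once negative it stays
negative. If `S` never dropped below `S0`, it would eventually lie in `[S0, r]` for some
`r < μᵢ`. There `pᵢ(S) > Dᵢ`, so `xᵢ` does not decrease, and `fᵢ(S) xᵢ` removes substrate at a
rate bounded away from zero, driving `S` to `-∞`. -/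

open Set Filter Real

section ScalarODE

variable {g g' : ℝ → ℝ} {t₀ : ℝ}

lemma sub_le_mul_sub_of_hasDerivAt_le {C : ℝ} (hg : ∀ t ∈ Ici t₀, HasDerivAt g (g' t) t)
    (hle : ∀ t ∈ Ici t₀, g' t ≤ C) {s t : ℝ} (hs : s ∈ Ici t₀) (hst : s ≤ t) :
    g t - g s ≤ C * (t - s) :=
  (convex_Ici t₀).image_sub_le_mul_sub_of_deriv_le
    (fun u hu => (hg u hu).continuousAt.continuousWithinAt)
    (fun u hu => (hg u (interior_subset hu)).differentiableAt.differentiableWithinAt)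
    (fun u hu => (hg u (interior_subset hu)).deriv ▸ hle u (interior_subset hu))
    s hs t (le_trans hs hst) hst

lemma mul_sub_le_sub_of_le_hasDerivAt {C : ℝ} (hg : ∀ t ∈ Ici t₀, HasDerivAt g (g' t) t)
    (hle : ∀ t ∈ Ici t₀, C ≤ g' t) {s t : ℝ} (hs : s ∈ Ici t₀) (hst : s ≤ t) :
    C * (t - s) ≤ g t - g s :=
  (convex_Ici t₀).mul_sub_le_image_sub_of_le_deriv
    (fun u hu => (hg u hu).continuousAt.continuousWithinAt)
    (fun u hu => (hg u (interior_subset hu)).differentiableAt.differentiableWithinAt)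
    (fun u hu => (hg u (interior_subset hu)).deriv ▸ hle u (interior_subset hu))
    s hs t (le_trans hs hst) hst

lemma exists_lt_of_hasDerivAt_le_neg {ε : ℝ} (hg : ∀ t ∈ Ici t₀, HasDerivAt g (g' t) t)
    (hε : 0 < ε) (hle : ∀ t ∈ Ici t₀, g' t ≤ -ε) (c : ℝ) :
    ∃ t ∈ Ici t₀, g t < c := by
  set t := max t₀ (t₀ + (g t₀ - c) / ε + 1)
  have ht : t₀ + (g t₀ - c) / ε + 1 ≤ t := le_max_right _ _
  have hdrop :=
    sub_le_mul_sub_of_hasDerivAt_le hg hle self_mem_Ici (le_max_left t₀ _ : t₀ ≤ t)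
  refine ⟨t, mem_Ici.2 (le_max_left _ _), ?_⟩
  have : g t₀ - c < ε * (t - t₀) := by
    rw [← div_lt_iff₀' hε]
    linarith
  linarith

lemma nonneg_of_hasDerivAt_pos_of_eq_zero (hg : ∀ t ∈ Ici t₀, HasDerivAt g (g' t) t)
    (h₀ : 0 ≤ g t₀) (hpos : ∀ t ∈ Ici t₀, g t = 0 → 0 < g' t) :
    ∀ t ∈ Ici t₀, 0 ≤ g t := by
  intro t ht
  have := image_le_of_deriv_right_lt_deriv_boundary (a := t₀) (b := t)
    (f := fun s => -g s) (f' := fun s => -g' s) (B := fun _ => 0) (B' := fun _ => 0)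
    (fun s hs => (hg s hs.1).continuousAt.neg.continuousWithinAt)
    (fun s hs => (hg s hs.1).neg.hasDerivWithinAt) (neg_nonpos.2 h₀)
    (fun _ => hasDerivAt_const _ _)
    (fun s hs hgs => neg_neg_of_pos (hpos s hs.1 (neg_eq_zero.1 hgs))) ⟨ht, le_rfl⟩
  exact neg_nonpos.1 this

lemma pos_of_hasDerivAt_mul_self {a : ℝ → ℝ} (ha : ContinuousOn a (Ici t₀))
    (hg : ∀ t ∈ Ici t₀, HasDerivAt g (a t * g t) t) (h₀ : 0 < g t₀) :
    ∀ t ∈ Ici t₀, 0 < g t := by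
  intro t ht
  obtain ⟨K, hK⟩ := isCompact_Icc.exists_bound_of_continuousOn
    (ha.mono (Icc_subset_Ici_self : Icc t₀ t ⊆ Ici t₀))
  -- `g` can only touch the decaying exponential `β` from above, where `g' ≥ -K g > β'`.
  set β : ℝ → ℝ := fun s => g t₀ * exp (-(K + 1) * (s - t₀))
  have hβpos : ∀ s, 0 < β s := fun s => by positivity
  have hβ : ∀ s, HasDerivAt β (-(K + 1) * β s) s := fun s => by
    have := (((hasDerivAt_id s).sub_const t₀).const_mul (-(K + 1))).exp.const_mul (g t₀)
    exact this.congr_deriv (by simp only [β, id]; ring)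
  have hgβ := image_le_of_deriv_right_lt_deriv_boundary (a := t₀) (b := t)
    (f := fun s => -g s) (f' := fun s => -(a s * g s)) (B := fun s => -β s)
    (B' := fun s => -(-(K + 1) * β s))
    (fun s hs => (hg s hs.1).continuousAt.neg.continuousWithinAt)
    (fun s hs => (hg s hs.1).neg.hasDerivWithinAt) (by simp [β])
    (fun s => (hβ s).neg)
    (fun s hs hgs => by
      have hgs : g s = β s := neg_inj.1 hgs
      have haK : -K ≤ a s :=
        neg_le_of_abs_le ((norm_eq_abs _).symm.trans_le (hK s (Ico_subset_Icc_self hs)))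
      rw [hgs]
      nlinarith [hβpos s])
    ⟨ht, le_rfl⟩
  linarith [hβpos t]

section Relaxation

variable {c D : ℝ} (hg : ∀ t ∈ Ici t₀, HasDerivAt g (g' t) t)
  (hle : ∀ t ∈ Ici t₀, g' t ≤ D * (c - g t))
include hg hle

lemma antitoneOn_sub_mul_exp_of_hasDerivAt_le :
    AntitoneOn (fun t => (g t - c) * exp (D * t)) (Ici t₀) := by
  intro s hs t ht hst
  have hderiv : ∀ u ∈ Ici t₀, HasDerivAt (fun t => (g t - c) * exp (D * t))
      (g' u * exp (D * u) + (g u - c) * (exp (D * u) * (D * 1))) u := fun u hu =>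
    ((hg u hu).sub_const c).mul ((hasDerivAt_id u).const_mul D).exp
  have := sub_le_mul_sub_of_hasDerivAt_le (C := 0) hderiv (fun u hu => by
    have := mul_le_mul_of_nonneg_right (hle u hu) (exp_pos (D * u)).le
    linarith) hs hst
  linarith

lemma lt_of_hasDerivAt_le_of_lt (h₀ : g t₀ < c) : ∀ t ∈ Ici t₀, g t < c := by
  intro t ht
  have := antitoneOn_sub_mul_exp_of_hasDerivAt_le hg hle self_mem_Ici ht ht
  have : (g t - c) * exp (D * t) < 0 :=
    this.trans_lt (mul_neg_of_neg_of_pos (sub_neg.2 h₀) (exp_pos _))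
  exact sub_neg.1 (neg_of_mul_neg_left this (exp_pos _).le)

lemma eventually_lt_of_hasDerivAt_le {r : ℝ} (hD : 0 < D) (hr : c < r) :
    ∀ᶠ t in atTop, g t < r := by
  have hgrow : Tendsto (fun t => (r - c) * exp (D * t)) atTop atTop :=
    (tendsto_exp_atTop.comp (tendsto_id.const_mul_atTop hD)).const_mul_atTop (sub_pos.2 hr)
  filter_upwards [hgrow.eventually_gt_atTop ((g t₀ - c) * exp (D * t₀)),
    eventually_ge_atTop t₀] with t hbig ht
  have := antitoneOn_sub_mul_exp_of_hasDerivAt_le hg hle self_mem_Ici ht ht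
  have := this.trans_lt hbig
  exact sub_lt_sub_iff_right c |>.1 (lt_of_mul_lt_mul_right this (exp_pos _).le)

end Relaxation

end ScalarODE

lemma exists_lt_of_consumer_grows {S S' y φ q : ℝ → ℝ} {t₀ S₀ D r : ℝ} (hD : 0 < D)
    (hr : S₀ < r) (hφ : ContinuousOn φ (Icc S₀ r)) (hφpos : ∀ s ∈ Icc S₀ r, 0 < φ s)
    (hq : ∀ s ∈ Icc S₀ r, 0 ≤ q s) (hS : ∀ t ∈ Ici t₀, HasDerivAt S (S' t) t)
    (hS'le : ∀ t ∈ Ici t₀, S' t ≤ D * (S₀ - S t))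
    (hS'consumed : ∀ t ∈ Ici t₀, S' t ≤ D * (S₀ - S t) - φ (S t) * y t)
    (hy : ∀ t ∈ Ici t₀, HasDerivAt y (q (S t) * y t) t)
    (hypos : ∀ t ∈ Ici t₀, 0 < y t) :
    ∃ t ∈ Ici t₀, S t < S₀ := by
  by_contra! hge
  obtain ⟨T, hT⟩ := ((eventually_lt_of_hasDerivAt_le hS hS'le hD hr).and
    (eventually_ge_atTop t₀)).exists_forall_of_atTop
  have hT₀ : T ∈ Ici t₀ := (hT T le_rfl).2
  have hsub : Ici T ⊆ Ici t₀ := Ici_subset_Ici.2 hT₀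
  have hSmem : ∀ t ∈ Ici T, S t ∈ Icc S₀ r := fun t ht =>
    ⟨hge t (hT t ht).2, (hT t ht).1.le⟩
  obtain ⟨c, hc, hφc⟩ := isCompact_Icc.exists_forall_le' hφ hφpos
  -- while `S ∈ [S₀, r]` the consumer does not decline, so it removes substrate at a fixed rate
  have hyT : ∀ t ∈ Ici T, y T ≤ y t := fun t ht => by
    have := mul_sub_le_sub_of_le_hasDerivAt (C := 0) (fun u hu => hy u (hsub hu))
      (fun u hu => mul_nonneg (hq _ (hSmem u hu)) (hypos u (hsub hu)).le)
      self_mem_Ici ht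
    linarith
  obtain ⟨t, ht, hlt⟩ := exists_lt_of_hasDerivAt_le_neg (t₀ := T) (ε := c * y T)
    (fun u hu => hS u (hsub hu)) (mul_pos hc (hypos T hT₀)) (fun u hu => by
      have hdil : D * (S₀ - S u) ≤ 0 :=
        mul_nonpos_of_nonneg_of_nonpos hD.le (sub_nonpos.2 (hSmem u hu).1)
      have hcons : c * y T ≤ φ (S u) * y u :=
        mul_le_mul (hφc _ (hSmem u hu)) (hyT u hu) (hypos T hT₀).le (hφpos _ (hSmem u hu)).le
      linarith [hS'consumed u (hsub hu)]) S₀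
  exact hlt.not_ge (hge t (hsub ht))

theorem chemostat_S_eventually_below_S0_general
    (n : ℕ) (S0 D : ℝ) (Di : Fin n → ℝ)
    (f p : Fin n → ℝ → ℝ)
    (hS0 : 0 < S0) (hD : 0 < D)
    (hfL : ∀ i, LocallyLipschitz (f i)) (hpL : ∀ i, LocallyLipschitz (p i))
    (hf0 : ∀ i, f i 0 = 0)
    (hfpos : ∀ i, ∀ s > (0:ℝ), 0 < f i s)
    (lam mu : Fin n → EReal)
    (habove : ∀ j, ∀ s : ℝ, lam j < (s : EReal) → (s : EReal) < mu j →
      Di j < p j s)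
    (S : ℝ → ℝ) (x : Fin n → ℝ → ℝ)
    (hSode : ∀ t ∈ Ici (0:ℝ),
      HasDerivAt S (D * (S0 - S t) - ∑ i, f i (S t) * x i t) t)
    (hxode : ∀ i, ∀ t ∈ Ici (0:ℝ),
      HasDerivAt (x i) ((p i (S t) - Di i) * x i t) t)
    (hS_init : 0 ≤ S 0) (hx_init : ∀ j, 0 < x j 0)
    (i : Fin n) (hi : lam i < (S0 : EReal) ∧ (S0 : EReal) < mu i) :
    ∃ T : ℝ, ∀ t ≥ T, S t < S0 := by
  have hScont : ContinuousOn S (Ici 0) := fun t ht =>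
    (hSode t ht).continuousAt.continuousWithinAt
  have hxpos : ∀ j, ∀ t ∈ Ici (0:ℝ), 0 < x j t := fun j =>
    pos_of_hasDerivAt_mul_self
      (((hpL j).continuous.comp_continuousOn hScont).sub continuousOn_const) (hxode j) (hx_init j)
  have hSnonneg : ∀ t ∈ Ici (0:ℝ), 0 ≤ S t :=
    nonneg_of_hasDerivAt_pos_of_eq_zero hSode hS_init fun t _ hSt => by
      simpa [hSt, hf0] using mul_pos hD hS0
  have hfS : ∀ j, ∀ t ∈ Ici (0:ℝ), 0 ≤ f j (S t) := fun j t ht =>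
    (hSnonneg t ht).eq_or_lt.elim (fun h => by rw [← h, hf0]) fun h => (hfpos j _ h).le
  have hconsumed : ∀ j, ∀ t ∈ Ici (0:ℝ), 0 ≤ f j (S t) * x j t := fun j t ht =>
    mul_nonneg (hfS j t ht) (hxpos j t ht).le
  have hconsumption : ∀ t ∈ Ici (0:ℝ), 0 ≤ ∑ j, f j (S t) * x j t := fun t ht =>
    Finset.sum_nonneg fun j _ => hconsumed j t ht
  obtain ⟨r, hS0r, hrmu⟩ := EReal.exists_between_coe_real hi.2
  obtain ⟨t₁, ht₁, hlt⟩ := exists_lt_of_consumer_grows (q := fun s => p i s - Di i) hD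
    (EReal.coe_lt_coe_iff.1 hS0r) (hfL i).continuous.continuousOn
    (fun s hs => hfpos i s (hS0.trans_le hs.1))
    (fun s hs => sub_nonneg.2 (habove i s (hi.1.trans_le (EReal.coe_le_coe_iff.2 hs.1))
      ((EReal.coe_le_coe_iff.2 hs.2).trans_lt hrmu)).le)
    hSode (fun t ht => by linarith [hconsumption t ht])
    (fun t ht => by
      linarith [Finset.single_le_sum (fun j _ => hconsumed j t ht) (Finset.mem_univ i)])
    (hxode i) (hxpos i)
  have hsub : Ici t₁ ⊆ Ici 0 := Ici_subset_Ici.2 ht₁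
  exact ⟨t₁, fun t ht => lt_of_hasDerivAt_le_of_lt (D := D) (fun u hu => hSode u (hsub hu))
    (fun u hu => by linarith [hconsumption u (hsub hu)]) hlt t ht⟩

/-- If `λᵢ < S⁰ < μᵢ` for some `i` with `xᵢ(0) > 0`, then `S(t) < S⁰`
for all sufficiently large `t` along any solution with positive initial conditions.
The break-even concentrations `λᵢ ≤ μᵢ` (possibly `+∞`, hence `EReal`-valued) are
characterized by `pᵢ(S) < Dᵢ` for `S ∉ [λᵢ, μᵢ]` and `pᵢ(S) > Dᵢ` for `S ∈ (λᵢ, μᵢ)`. -/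
theorem chemostat_S_eventually_below_S0
    (n : ℕ) (S0 D : ℝ) (Di : Fin n → ℝ)
    (f p : Fin n → ℝ → ℝ)
    (hS0 : 0 < S0) (hD : 0 < D) (hDi : ∀ i, 0 < Di i)
    (hfL : ∀ i, LocallyLipschitz (f i)) (hpL : ∀ i, LocallyLipschitz (p i))
    (hf0 : ∀ i, f i 0 = 0) (hp0 : ∀ i, p i 0 = 0)
    (hfpos : ∀ i, ∀ s > (0:ℝ), 0 < f i s) (hppos : ∀ i, ∀ s > (0:ℝ), 0 < p i s)
    (lam mu : Fin n → EReal) (hlammu : ∀ j, lam j ≤ mu j)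
    (hbelow : ∀ j, ∀ s : ℝ, 0 ≤ s → ((s : EReal) < lam j ∨ mu j < (s : EReal)) →
      p j s < Di j)
    (habove : ∀ j, ∀ s : ℝ, lam j < (s : EReal) → (s : EReal) < mu j →
      Di j < p j s)
    (S : ℝ → ℝ) (x : Fin n → ℝ → ℝ)
    (hSode : ∀ t ∈ Ici (0:ℝ),
      HasDerivAt S (D * (S0 - S t) - ∑ i, f i (S t) * x i t) t)
    (hxode : ∀ i, ∀ t ∈ Ici (0:ℝ),
      HasDerivAt (x i) ((p i (S t) - Di i) * x i t) t)
    (hS_init : 0 ≤ S 0) (hx_init : ∀ j, 0 < x j 0)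
    (i : Fin n) (hi : lam i < (S0 : EReal) ∧ (S0 : EReal) < mu i) :
    ∃ T : ℝ, ∀ t ≥ T, S t < S0 :=
  chemostat_S_eventually_below_S0_general n S0 D Di f p hS0 hD hfL hpL hf0 hfpos lam mu habove S x
    hSode hxode hS_init hx_init i hi
end

section
/- Define V(S, x_1, …, x_n) = ∫_{λ_1}^{S} (p_1(σ) - D_1)(S^0 - λ_1)/(f_1(λ_1)(S^0 - σ)) dσ + ∫_{x_1*}^{x_1} (ξ - x_1*)/ξ dξ + Σ_{i=2}^n α_i x_i. Then V is continuous, nonnegative on {0 < S < S^0, x_1 > 0, x_i ≥ 0}, and equals 0 only at the point E_1* = (λ_1, x_1*, 0, …, 0). -/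
open Set

open MeasureTheory intervalIntegral


lemma primitive_contOn {f : ℝ → ℝ} {U : Set ℝ} (hU : IsOpen U) (hc : U.OrdConnected)
    (hf : ContinuousOn f U) {a : ℝ} (ha : a ∈ U) :
    ContinuousOn (fun s => ∫ t in a..s, f t) U := by
  intro s hs
  have hsub : uIcc a s ⊆ U := hc.uIcc_subset ha hs
  have hint : IntervalIntegrable f volume a s := (hf.mono hsub).intervalIntegrable
  have hd := intervalIntegral.integral_hasDerivAt_right hint
      (hf.stronglyMeasurableAtFilter hU s hs) (hf.continuousAt (hU.mem_nhds hs))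
  exact hd.continuousAt.continuousWithinAt

lemma integral_sign {f : ℝ → ℝ} {lo hi a s : ℝ}
    (hf : ContinuousOn f (Ioo lo hi))
    (hla : lo < a) (hah : a < hi) (hls : lo < s) (hsh : s < hi)
    (hneg : ∀ t, lo < t → t < a → f t < 0)
    (hpos : ∀ t, a < t → t < hi → 0 < f t) :
    0 ≤ (∫ t in a..s, f t) ∧ ((∫ t in a..s, f t) = 0 ↔ s = a) := by
  rcases lt_trichotomy s a with h|h|h
  · have hsub : uIcc s a ⊆ Ioo lo hi := by
      rw [uIcc_of_le h.le]; intro t ht; exact ⟨hls.trans_le ht.1, lt_of_le_of_lt ht.2 hah⟩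
    have hint : IntervalIntegrable f volume s a := (hf.mono hsub).intervalIntegrable
    have hlt : 0 < ∫ t in s..a, -f t := by
      apply intervalIntegral.intervalIntegral_pos_of_pos_on hint.neg _ h
      intro t ht
      simpa using hneg t (hls.trans ht.1) ht.2
    rw [intervalIntegral.integral_neg] at hlt
    have : 0 < ∫ t in a..s, f t := by
      rw [intervalIntegral.integral_symm]; linarith
    exact ⟨this.le, by constructor <;> intro hh <;> [exact absurd hh this.ne'; exact absurd hh h.ne]⟩
  · subst h; simp
  · have hsub : uIcc a s ⊆ Ioo lo hi := by
      rw [uIcc_of_le h.le]; intro t ht; exact ⟨hla.trans_le ht.1, lt_of_le_of_lt ht.2 hsh⟩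
    have hint : IntervalIntegrable f volume a s := (hf.mono hsub).intervalIntegrable
    have hlt : 0 < ∫ t in a..s, f t := by
      apply intervalIntegral.intervalIntegral_pos_of_pos_on hint _ h
      intro t ht; exact hpos t ht.1 (ht.2.trans hsh)
    exact ⟨hlt.le, by constructor <;> intro hh <;> [exact absurd hh hlt.ne'; exact absurd hh h.ne']⟩


/-- The Lyapunov function
`V(S,x) = ∫_{λ₁}^{S} (p₁(σ)-D₁)(S⁰-λ₁)/(f₁(λ₁)(S⁰-σ)) dσ
  + ∫_{x₁*}^{x₁} (ξ-x₁*)/ξ dξ + ∑_{i≥2} αᵢ xᵢ`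
is continuous and nonnegative on `{0 < S < S⁰, x₁ > 0, xᵢ ≥ 0}`, and vanishes
only at `E₁* = (λ₁, x₁*, 0, …, 0)`. Species `1` is the index `0 : Fin n`. -/
theorem chemostat_lyapunov_properties
    (n : ℕ) [NeZero n] (S0 D D1 lam1 mu1 : ℝ)
    (f1 p1 : ℝ → ℝ) (α : Fin n → ℝ)
    (hS0 : 0 < lam1) (hlam : lam1 < S0) (hmu : S0 < mu1)
    (hp1c : Continuous p1)
    (hp1lam : p1 lam1 = D1)
    (hp1above : ∀ s, lam1 < s → s < mu1 → D1 < p1 s)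
    (hp1below : ∀ s, 0 ≤ s → (s < lam1 ∨ mu1 < s) → p1 s < D1)
    (hf1 : 0 < f1 lam1)
    (hα : ∀ i : Fin n, i ≠ 0 → 0 < α i)
    (xstar : ℝ) (hxstar : xstar = D * (S0 - lam1) / f1 lam1) (hD : 0 < D)
    (V : ℝ → (Fin n → ℝ) → ℝ)
    (hV : ∀ s x, V s x =
      (∫ σ in lam1..s, (p1 σ - D1) * (S0 - lam1) / (f1 lam1 * (S0 - σ))) +
      (∫ ξ in xstar..(x 0), (ξ - xstar) / ξ) +
      ∑ i ∈ Finset.univ.erase (0 : Fin n), α i * x i) :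
    ContinuousOn (fun q : ℝ × (Fin n → ℝ) => V q.1 q.2)
      {q : ℝ × (Fin n → ℝ) | 0 < q.1 ∧ q.1 < S0 ∧ 0 < q.2 0 ∧ ∀ i, 0 ≤ q.2 i} ∧
    (∀ s : ℝ, ∀ x : Fin n → ℝ, 0 < s → s < S0 → 0 < x 0 → (∀ i, 0 ≤ x i) →
      0 ≤ V s x ∧
      (V s x = 0 ↔ s = lam1 ∧ x 0 = xstar ∧ ∀ i ≠ (0 : Fin n), x i = 0)) := by
  have hxs : 0 < xstar := by
    rw [hxstar]; exact div_pos (mul_pos hD (by linarith)) hf1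
  set g : ℝ → ℝ := fun σ => (p1 σ - D1) * (S0 - lam1) / (f1 lam1 * (S0 - σ)) with hg
  set h : ℝ → ℝ := fun ξ => (ξ - xstar) / ξ with hh
  -- continuity of g on Iio S0 and h on Ioi 0
  have hgc : ContinuousOn g (Iio S0) := by
    apply ContinuousOn.div ((hp1c.sub continuous_const).mul continuous_const).continuousOn
      (continuousOn_const.mul ((continuous_const.sub continuous_id).continuousOn))
    intro t ht
    exact (mul_pos hf1 (sub_pos.2 ht)).ne'
  have hhc : ContinuousOn h (Ioi 0) := by
    apply ContinuousOn.div ((continuous_id.sub continuous_const).continuousOn)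
      continuous_id.continuousOn
    intro t ht; exact ne_of_gt ht
  constructor
  · -- Continuity
    have hVeq : (fun q : ℝ × (Fin n → ℝ) => V q.1 q.2)
        = fun q : ℝ × (Fin n → ℝ) =>
          (∫ σ in lam1..q.1, g σ) + (∫ ξ in xstar..(q.2 0), h ξ) +
          ∑ i ∈ Finset.univ.erase (0 : Fin n), α i * q.2 i := funext fun q => hV q.1 q.2
    rw [hVeq]
    have hF : ContinuousOn (fun s => ∫ t in lam1..s, g t) (Iio S0) :=
      primitive_contOn isOpen_Iio ordConnected_Iio hgc hlam
    have hG : ContinuousOn (fun u => ∫ t in xstar..u, h t) (Ioi 0) :=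
      primitive_contOn isOpen_Ioi ordConnected_Ioi hhc hxs
    apply ContinuousOn.add
    apply ContinuousOn.add
    · exact hF.comp continuous_fst.continuousOn (fun q hq => hq.2.1)
    · exact hG.comp ((continuous_apply (0 : Fin n)).comp continuous_snd).continuousOn
        (fun q hq => hq.2.2.1)
    · exact (continuous_finset_sum _ fun i _ =>
        continuous_const.mul ((continuous_apply i).comp continuous_snd)).continuousOn
  · intro s x hs hsS hx0 hxnn
    -- term A
    have hA := integral_sign (f := g) (lo := 0) (hi := S0)
      (hgc.mono (fun t ht => ht.2)) hS0 hlam hs hsS ?_ ?_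
    rotate_left
    · intro t ht0 htl
      apply div_neg_of_neg_of_pos
      · exact mul_neg_of_neg_of_pos (sub_neg.2 (hp1below t ht0.le (Or.inl htl))) (by linarith)
      · exact mul_pos hf1 (by linarith)
    · intro t htl hth
      apply div_pos
      · exact mul_pos (sub_pos.2 (hp1above t htl (hth.trans hmu))) (by linarith)
      · exact mul_pos hf1 (by linarith)
    -- term B
    set M : ℝ := max (x 0) xstar + 1 with hM
    have hxM : x 0 < M := by
      have h1 := le_max_left (x 0) xstar; rw [hM]; linarith
    have hsM : xstar < M := by
      have h1 := le_max_right (x 0) xstar; rw [hM]; linarith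
    have hB := integral_sign (f := h) (lo := 0) (hi := M)
      (hhc.mono (fun t ht => ht.1)) hxs hsM hx0 hxM ?_ ?_
    rotate_left
    · intro t ht0 htl
      exact div_neg_of_neg_of_pos (by linarith) ht0
    · intro t htl _
      exact div_pos (by linarith) (hxs.trans htl)
    -- term C
    have hCnn : 0 ≤ ∑ i ∈ Finset.univ.erase (0 : Fin n), α i * x i :=
      Finset.sum_nonneg fun i hi =>
        mul_nonneg (hα i (Finset.mem_erase.1 hi).1).le (hxnn i)
    have hC0 : (∑ i ∈ Finset.univ.erase (0 : Fin n), α i * x i) = 0 ↔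
        ∀ i ≠ (0 : Fin n), x i = 0 := by
      rw [Finset.sum_eq_zero_iff_of_nonneg
        (fun i hi => mul_nonneg (hα i (Finset.mem_erase.1 hi).1).le (hxnn i))]
      constructor
      · intro hz i hi
        have := hz i (Finset.mem_erase.2 ⟨hi, Finset.mem_univ i⟩)
        rcases mul_eq_zero.1 this with hc | hc
        · exact absurd hc (hα i hi).ne'
        · exact hc
      · intro hz i hi
        rw [hz i (Finset.mem_erase.1 hi).1, mul_zero]
    rw [hV]
    refine ⟨by linarith [hA.1, hB.1, hCnn], ?_⟩
    constructor
    · intro hz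
      have hAz : (∫ σ in lam1..s, g σ) = 0 := by linarith [hA.1, hB.1, hCnn]
      have hBz : (∫ ξ in xstar..(x 0), h ξ) = 0 := by linarith [hA.1, hB.1, hCnn]
      have hCz : (∑ i ∈ Finset.univ.erase (0 : Fin n), α i * x i) = 0 := by
        linarith [hA.1, hB.1, hCnn]
      exact ⟨hA.2.1 hAz, hB.2.1 hBz, hC0.1 hCz⟩
    · rintro ⟨h1, h2, h3⟩
      rw [hA.2.symm.1 h1, hB.2.symm.1 h2, hC0.2 h3]
      ring
end

section
/- Along any solution of the chemostat system the derivative of the Lyapunov function V of Theorem 2 satisfies V' = x_1 (p_1(S) - D_1)(F(λ_1) - F(S))/F(λ_1) + Σ_{i=2}^n x_i h_i(S), where F(S) = f_1(S)/(S^0 - S) and h_i(S) = (p_i(S) - D_i)(α_i - g_i(S)) with g_i(S) = (f_i(S)/f_1(λ_1)) · ((p_1(S) - D_1)/(p_i(S) - D_i)) · ((S^0 - λ_1)/(S^0 - S)). -/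
/-!
`V` is a sum of two primitives and a linear form, so by the fundamental theorem of calculus
and the chain rule `V' = G(S) S' + (1 - x₁*/x₁) x₁' + ∑_{i ≥ 2} αᵢ xᵢ'`, with `G` the integrand
of the first integral. Substituting the equations of motion, `αᵢ xᵢ'` and the share
`-G(S) fᵢ(S) xᵢ` of `G(S) S'` combine into `xᵢ hᵢ(S)` for `i ≥ 2`; since `x₁* F(λ₁) = D`, the
remaining terms collapse to `x₁ (p₁(S) - D₁)(1 - F(S)/F(λ₁))`.
-/

open Set

theorem hasDerivAt_intervalIntegral_of_continuousOn {E : Type*} [NormedAddCommGroup E]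
    [NormedSpace ℝ E] [CompleteSpace E] {φ : ℝ → E} {U : Set ℝ} {a b : ℝ}
    (hU : IsOpen U) (hφ : ContinuousOn φ U) (hab : uIcc a b ⊆ U) :
    HasDerivAt (fun u => ∫ x in a..u, φ x) (φ b) b := by
  have hb : b ∈ U := hab right_mem_uIcc
  exact intervalIntegral.integral_hasDerivAt_right ((hφ.mono hab).intervalIntegrable)
    (hφ.stronglyMeasurableAtFilter hU b hb) (hφ.continuousAt (hU.mem_nhds hb))

theorem hasDerivAt_integral_sub_div_self {a b : ℝ} (ha : 0 < a) (hb : 0 < b) :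
    HasDerivAt (fun u => ∫ ξ in a..u, (ξ - a) / ξ) ((b - a) / b) b := by
  refine hasDerivAt_intervalIntegral_of_continuousOn (isOpen_Ioi (a := 0)) ?_ ?_
  · exact (continuousOn_id.sub continuousOn_const).div continuousOn_id
      fun ξ (hξ : 0 < ξ) => hξ.ne'
  · exact fun ξ hξ => lt_of_lt_of_le (lt_min ha hb) hξ.1

theorem hasDerivAt_integral_div_sub {p : ℝ → ℝ} (hp : Continuous p) {c k S0 a b : ℝ}
    (hk : k ≠ 0) (ha : a < S0) (hb : b < S0) :
    HasDerivAt (fun u => ∫ σ in a..u, p σ * c / (k * (S0 - σ)))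
      (p b * c / (k * (S0 - b))) b := by
  refine hasDerivAt_intervalIntegral_of_continuousOn (isOpen_Iio (a := S0)) ?_ ?_
  · exact (hp.continuousOn.mul continuousOn_const).div
      (continuousOn_const.mul (continuousOn_const.sub continuousOn_id))
      fun σ (hσ : σ < S0) => mul_ne_zero hk (sub_pos.2 hσ).ne'
  · exact fun σ hσ => lt_of_le_of_lt hσ.2 (max_lt ha hb)

theorem chemostat_species_one_rate_eq {S0 D lam s k fs x r : ℝ} (hk : k ≠ 0)
    (hlam : S0 - lam ≠ 0) (hs : S0 - s ≠ 0) (hx : x ≠ 0) :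
    x * r * (k / (S0 - lam) - fs / (S0 - s)) / (k / (S0 - lam)) =
      r * (S0 - lam) / (k * (S0 - s)) * (D * (S0 - s) - fs * x) +
        (x - D * (S0 - lam) / k) / x * (r * x) := by
  field_simp
  ring

-- Species 1 of the paper is the index `0 : Fin n`.
theorem chemostat_lyapunov_derivative_formula_general
    (n : ℕ) [NeZero n] (S0 D lam1 : ℝ) (Di : Fin n → ℝ)
    (f p : Fin n → ℝ → ℝ) (α : Fin n → ℝ)
    (hD : 0 < D)
    (hpc : ∀ i, Continuous (p i))
    (hlamS0 : lam1 < S0)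
    (hf1 : 0 < f 0 lam1)
    (xstar : ℝ) (hxstar : xstar = D * (S0 - lam1) / f 0 lam1)
    (V : ℝ → (Fin n → ℝ) → ℝ)
    (hV : ∀ s y, V s y =
      (∫ σ in lam1..s, (p 0 σ - Di 0) * (S0 - lam1) / (f 0 lam1 * (S0 - σ))) +
      (∫ ξ in xstar..(y 0), (ξ - xstar) / ξ) +
      ∑ i ∈ Finset.univ.erase (0 : Fin n), α i * y i)
    (g : Fin n → ℝ → ℝ) (Fn : ℝ → ℝ) (hF : ∀ s, Fn s = f 0 s / (S0 - s))
    (hg : ∀ i s, g i s = (f i s / f 0 lam1) * ((p 0 s - Di 0) / (p i s - Di i)) *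
      ((S0 - lam1) / (S0 - s)))
    (h : Fin n → ℝ → ℝ)
    (hh : ∀ i s, h i s = (p i s - Di i) * (α i - g i s))
    (S : ℝ → ℝ) (x : Fin n → ℝ → ℝ) (t0 : ℝ)
    (hSode : HasDerivAt S (D * (S0 - S t0) - ∑ i, f i (S t0) * x i t0) t0)
    (hxode : ∀ i, HasDerivAt (x i) ((p i (S t0) - Di i) * x i t0) t0)
    (hSlt : S t0 < S0) (hxpos : ∀ i, 0 < x i t0)
    (hpne : ∀ i : Fin n, i ≠ 0 → p i (S t0) ≠ Di i) :
    HasDerivAt (fun t => V (S t) (fun i => x i t))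
      (x 0 t0 * (p 0 (S t0) - Di 0) * (Fn lam1 - Fn (S t0)) / Fn lam1 +
        ∑ i ∈ Finset.univ.erase (0 : Fin n), x i t0 * h i (S t0)) t0 := by
  set s := S t0
  set rate : ℝ → ℝ := fun σ => (p 0 σ - Di 0) * (S0 - lam1) / (f 0 lam1 * (S0 - σ))
  have hxstar_pos : 0 < xstar := hxstar ▸ div_pos (mul_pos hD (sub_pos.2 hlamS0)) hf1
  have hV' : HasDerivAt (fun t => V (S t) (fun i => x i t))
      (rate s * (D * (S0 - s) - ∑ i, f i s * x i t0) +
        (x 0 t0 - xstar) / x 0 t0 * ((p 0 s - Di 0) * x 0 t0) +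
        ∑ i ∈ Finset.univ.erase (0 : Fin n), α i * ((p i s - Di i) * x i t0)) t0 := by
    simp only [hV]
    exact (((hasDerivAt_integral_div_sub ((hpc 0).sub continuous_const) hf1.ne' hlamS0
      hSlt).comp t0 hSode).add
      ((hasDerivAt_integral_sub_div_self hxstar_pos (hxpos 0)).comp t0 (hxode 0))).add
      (HasDerivAt.fun_sum fun i _ => (hxode i).const_mul (α i))
  refine hV'.congr_deriv ?_
  have hterm : ∀ i ∈ Finset.univ.erase (0 : Fin n),
      x i t0 * h i s = α i * ((p i s - Di i) * x i t0) - rate s * (f i s * x i t0) := by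
    intro i hi
    have hne : p i s - Di i ≠ 0 := sub_ne_zero.2 (hpne i (Finset.ne_of_mem_erase hi))
    rw [hh, hg]
    simp only [rate]
    field_simp
  rw [Finset.sum_congr rfl hterm, Finset.sum_sub_distrib, ← Finset.mul_sum,
    ← Finset.add_sum_erase _ _ (Finset.mem_univ 0), hF, hF, hxstar,
    chemostat_species_one_rate_eq (D := D) hf1.ne' (sub_pos.2 hlamS0).ne'
      (sub_pos.2 hSlt).ne' (hxpos 0).ne']
  ring

/-- Along any solution of the chemostat system, the derivative of the
Lyapunov function `V` satisfies
`V' = x₁ (p₁(S)-D₁)(F(λ₁)-F(S))/F(λ₁) + ∑_{i≥2} xᵢ hᵢ(S)`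
where `F(S) = f₁(S)/(S⁰-S)` and `hᵢ(S) = (pᵢ(S)-Dᵢ)(αᵢ - gᵢ(S))` with
`gᵢ(S) = (fᵢ(S)/f₁(λ₁))·((p₁(S)-D₁)/(pᵢ(S)-Dᵢ))·((S⁰-λ₁)/(S⁰-S))`,
at points where `pᵢ(S) ≠ Dᵢ` for all `i ≥ 2`. Species `1` is the index `0 : Fin n`. -/
theorem chemostat_lyapunov_derivative_formula
    (n : ℕ) [NeZero n] (S0 D lam1 : ℝ) (Di : Fin n → ℝ)
    (f p : Fin n → ℝ → ℝ) (α : Fin n → ℝ)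
    (hS0 : 0 < S0) (hD : 0 < D) (hDi : ∀ i, 0 < Di i)
    (hfc : ∀ i, Continuous (f i)) (hpc : ∀ i, Continuous (p i))
    (hlam : 0 < lam1) (hlamS0 : lam1 < S0)
    (hp1lam : p 0 lam1 = Di 0) (hf1 : 0 < f 0 lam1)
    (xstar : ℝ) (hxstar : xstar = D * (S0 - lam1) / f 0 lam1)
    (V : ℝ → (Fin n → ℝ) → ℝ)
    (hV : ∀ s y, V s y =
      (∫ σ in lam1..s, (p 0 σ - Di 0) * (S0 - lam1) / (f 0 lam1 * (S0 - σ))) +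
      (∫ ξ in xstar..(y 0), (ξ - xstar) / ξ) +
      ∑ i ∈ Finset.univ.erase (0 : Fin n), α i * y i)
    (g : Fin n → ℝ → ℝ) (Fn : ℝ → ℝ) (hF : ∀ s, Fn s = f 0 s / (S0 - s))
    (hg : ∀ i s, g i s = (f i s / f 0 lam1) * ((p 0 s - Di 0) / (p i s - Di i)) *
      ((S0 - lam1) / (S0 - s)))
    (h : Fin n → ℝ → ℝ)
    (hh : ∀ i s, h i s = (p i s - Di i) * (α i - g i s))
    (S : ℝ → ℝ) (x : Fin n → ℝ → ℝ) (t0 : ℝ)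
    (hSode : HasDerivAt S (D * (S0 - S t0) - ∑ i, f i (S t0) * x i t0) t0)
    (hxode : ∀ i, HasDerivAt (x i) ((p i (S t0) - Di i) * x i t0) t0)
    (hSpos : 0 < S t0) (hSlt : S t0 < S0) (hxpos : ∀ i, 0 < x i t0)
    (hpne : ∀ i : Fin n, i ≠ 0 → p i (S t0) ≠ Di i) :
    HasDerivAt (fun t => V (S t) (fun i => x i t))
      (x 0 t0 * (p 0 (S t0) - Di 0) * (Fn lam1 - Fn (S t0)) / Fn lam1 +
        ∑ i ∈ Finset.univ.erase (0 : Fin n), x i t0 * h i (S t0)) t0 :=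
  chemostat_lyapunov_derivative_formula_general n S0 D lam1 Di f p α hD hpc hlamS0 hf1 xstar hxstar
    V hV g Fn hF hg h hh S x t0 hSode hxode hSlt hxpos hpne
end

section
/- The functions g_i and g_i^{SM} of Theorem 1 and Corollary 3 satisfy g_i(S) = ((S^0 - λ_1)/f_1(λ_1)) · F(S) · g_i^{SM}(S) for all S ∈ (0, S^0) with p_i(S) ≠ D_i, where F(S) = f_1(S)/(S^0 - S) and g_i^{SM}(S) = (f_i(S)/f_1(S)) · ((p_1(S) - D_1)/(p_i(S) - D_i)). Consequently, if F(S) < F(λ_1) on (0, λ_1), F(S) > F(λ_1) on (λ_1, S^0), and max_{0<S<λ_1} g_i^{SM}(S) ≤ α_i ≤ min_{λ_i<S<ρ_i} g_i^{SM}(S) for some α_i > 0, then the constants α_i' = α_i (S^0 - λ_1) F(λ_1)/f_1(λ_1) = α_i satisfy max_{0<S<λ_1} g_i(S) ≤ α_i' ≤ min_{λ_i<S<ρ_i} g_i(S). -/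
open Set

/-- `gᵢ(S) = ((S⁰-λ₁)/f₁(λ₁))·F(S)·gᵢ^{SM}(S)` for `S ∈ (0,S⁰)` with
`pᵢ(S) ≠ Dᵢ`, where `F(S) = f₁(S)/(S⁰-S)` and
`gᵢ^{SM}(S) = (fᵢ(S)/f₁(S))·((p₁(S)-D₁)/(pᵢ(S)-Dᵢ))`. Consequently, if
`F < F(λ₁)` on `(0,λ₁)`, `F > F(λ₁)` on `(λ₁,S⁰)` and
`max_{0<S<λ₁} gᵢ^{SM}(S) ≤ αᵢ ≤ min_{λᵢ<S<ρᵢ} gᵢ^{SM}(S)` for some `αᵢ > 0`,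
then the same constant `αᵢ' = αᵢ (S⁰-λ₁) F(λ₁)/f₁(λ₁) = αᵢ` satisfies
`max_{0<S<λ₁} gᵢ(S) ≤ αᵢ ≤ min_{λᵢ<S<ρᵢ} gᵢ(S)` (`ρᵢ = min(μᵢ, S⁰)`). -/
theorem chemostat_gSM_relation_and_transfer
    (S0 D1 Dii lam1 mu1 lami : ℝ) (mui : EReal)
    (f1 fi p1 pi : ℝ → ℝ)
    (hf1pos : ∀ s, 0 < s → s < S0 → 0 < f1 s)
    (hfipos : ∀ s, 0 < s → s < S0 → 0 < fi s)
    (hlam1pos : 0 < lam1) (hlam1i : lam1 < lami)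
    (hlamS0 : lam1 < S0) (hS0mu1 : S0 < mu1)
    (hp1below : ∀ s, 0 ≤ s → (s < lam1 ∨ mu1 < s) → p1 s < D1)
    (hp1above : ∀ s, lam1 < s → s < mu1 → D1 < p1 s)
    (hpibelow : ∀ s : ℝ, 0 ≤ s → ((s : EReal) < lami ∨ mui < (s : EReal)) →
      pi s < Dii)
    (hpiabove : ∀ s : ℝ, lami < s → (s : EReal) < mui → Dii < pi s)
    (g gSM Fn : ℝ → ℝ)
    (hF : ∀ s, Fn s = f1 s / (S0 - s))
    (hg : ∀ s, g s = (fi s / f1 lam1) * ((p1 s - D1) / (pi s - Dii)) *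
      ((S0 - lam1) / (S0 - s)))
    (hgSM : ∀ s, gSM s = (fi s / f1 s) * ((p1 s - D1) / (pi s - Dii))) :
    -- the pointwise identity
    (∀ s, 0 < s → s < S0 → pi s ≠ Dii →
      g s = ((S0 - lam1) / f1 lam1) * Fn s * gSM s) ∧
    -- the transfer of the αᵢ-bounds
    ((∀ s, 0 < s → s < lam1 → Fn s < Fn lam1) →
     (∀ s, lam1 < s → s < S0 → Fn lam1 < Fn s) →
     ∀ αi : ℝ, 0 < αi →
      (∀ s, 0 < s → s < lam1 → gSM s ≤ αi) →
      (∀ s : ℝ, lami < s → (s : EReal) < min mui (S0 : EReal) → αi ≤ gSM s) →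
      (∀ s, 0 < s → s < lam1 → g s ≤ αi) ∧
      (∀ s : ℝ, lami < s → (s : EReal) < min mui (S0 : EReal) → αi ≤ g s)) := by
  have hf1l : 0 < f1 lam1 := hf1pos lam1 hlam1pos hlamS0
  have hC : 0 < (S0 - lam1) / f1 lam1 := div_pos (by linarith) hf1l
  have hCF : ((S0 - lam1) / f1 lam1) * Fn lam1 = 1 := by
    have hne1 : S0 - lam1 ≠ 0 := by
      have : (0:ℝ) < S0 - lam1 := by linarith
      exact this.ne'
    rw [hF]
    field_simp
  have hid : ∀ s, 0 < s → s < S0 → pi s ≠ Dii →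
      g s = ((S0 - lam1) / f1 lam1) * Fn s * gSM s := by
    intro s hs hsS0 hne
    have hf1s : f1 s ≠ 0 := (hf1pos s hs hsS0).ne'
    have hS0s : S0 - s ≠ 0 := by
      have : (0:ℝ) < S0 - s := by linarith
      exact this.ne'
    have hpd : pi s - Dii ≠ 0 := sub_ne_zero.mpr hne
    rw [hg s, hgSM s, hF s]
    field_simp
  refine ⟨hid, ?_⟩
  intro hFlt hFgt αi hαi hmax hmin
  constructor
  · intro s hs hsl
    have hsS0 : s < S0 := lt_trans hsl hlamS0
    have hpis : pi s < Dii := by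
      refine hpibelow s hs.le (Or.inl ?_)
      exact_mod_cast lt_trans hsl hlam1i
    have hp1s : p1 s < D1 := hp1below s hs.le (Or.inl hsl)
    have hgSMnn : 0 ≤ gSM s := by
      rw [hgSM]
      have h1 : 0 < fi s / f1 s := div_pos (hfipos s hs hsS0) (hf1pos s hs hsS0)
      have h2 : 0 < (p1 s - D1) / (pi s - Dii) :=
        div_pos_of_neg_of_neg (by linarith) (by linarith)
      exact (mul_pos h1 h2).le
    have hle : g s ≤ gSM s := by
      rw [hid s hs hsS0 hpis.ne]
      calc ((S0 - lam1) / f1 lam1) * Fn s * gSM s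
          ≤ ((S0 - lam1) / f1 lam1) * Fn lam1 * gSM s := by
            apply mul_le_mul_of_nonneg_right _ hgSMnn
            exact mul_le_mul_of_nonneg_left (hFlt s hs hsl).le hC.le
        _ = gSM s := by rw [hCF, one_mul]
    exact hle.trans (hmax s hs hsl)
  · intro s hsl hsmin
    obtain ⟨hsmui, hsS0'⟩ := lt_min_iff.mp hsmin
    have hsS0 : s < S0 := by exact_mod_cast hsS0'
    have hs1 : lam1 < s := lt_trans hlam1i hsl
    have hs : 0 < s := lt_trans hlam1pos hs1
    have hpis : Dii < pi s := hpiabove s hsl hsmui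
    have hgSMa : αi ≤ gSM s := hmin s hsl hsmin
    have hge : gSM s ≤ g s := by
      rw [hid s hs hsS0 hpis.ne']
      calc gSM s = ((S0 - lam1) / f1 lam1) * Fn lam1 * gSM s := by
            rw [hCF, one_mul]
        _ ≤ ((S0 - lam1) / f1 lam1) * Fn s * gSM s := by
            apply mul_le_mul_of_nonneg_right _ (le_trans hαi.le hgSMa)
            exact mul_le_mul_of_nonneg_left (hFgt s hs1 hsS0).le hC.le
    exact hgSMa.trans hge
end
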